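/- For any two PMTA A₁ and A₂ over the same finite alphabet Σ, there exists a PMTA A over Σ with L(A) = L(A₁) ∪ L(A₂). -/

import Mathlib

/-- Positions in a binary tree: finite words over `{0,1}`. -/
abbrev Pos : Type := List Bool

/-- Vectors of natural numbers of dimension `s`. -/
abbrev Vec (s : ℕ) : Type := Fin s → ℕ

/-- An infinite path: a sequence of positions starting at the root, each step
descending to a child. -/
def IsPath (π : ℕ → Pos) : Prop :=
  π 0 = [] ∧ ∀ i : ℕ, ∃ b : Bool, π (i + 1) = π i ++ [b]

/-- The set of values occurring infinitely often in a sequence. -/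
def infOcc {Q : Type*} (g : ℕ → Q) : Set Q :=
  {q | {n : ℕ | g n = q}.Infinite}

/-- A linear subset of `ℕ^s`. -/
def IsLinearSetVec {s : ℕ} (C : Set (Vec s)) : Prop :=
  ∃ (l : ℕ) (v₀ : Vec s) (v : Fin l → Vec s),
    C = {w | ∃ m : Fin l → ℕ, w = v₀ + ∑ i, m i • v i}

/-- A semilinear subset of `ℕ^s`: a finite union of linear sets. -/
def IsSemilinearSetVec {s : ℕ} (C : Set (Vec s)) : Prop :=
  ∃ (k : ℕ) (Cs : Fin k → Set (Vec s)),
    (∀ i, IsLinearSetVec (Cs i)) ∧ C = ⋃ i, Cs i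

/-- A Parikh-Muller tree automaton of dimension `s` over the alphabet `σ`.
Labels in `Σ × D` are modelled as pairs `(a, some d)` and labels in `Σ` as `(a, none)`. -/
structure PMTA (σ : Type) (s : ℕ) where
  /-- states -/
  Q : Type
  finQ : Finite Q
  /-- counting states -/
  QP : Set Q
  /-- Muller states -/
  Qω : Set Q
  hdisj : Disjoint QP Qω
  hcover : QP ∪ Qω = Set.univ
  /-- initial state -/
  qI : Q
  /-- the finite set of counter increments -/
  D : Set (Vec s)
  hD : D.Finite
  /-- counting transitions -/
  ΔP : Set (Q × (σ × Vec s) × Q × Q)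
  /-- Muller transitions -/
  Δω : Set (Q × σ × Q × Q)
  hΔP : ∀ t ∈ ΔP, t.1 ∈ QP ∪ {qI} ∧ t.2.1.2 ∈ D
  hΔω : ∀ t ∈ Δω, t.1 ∈ Qω ∪ {qI} ∧ t.2.2.1 ∈ Qω ∧ t.2.2.2 ∈ Qω
  /-- the Muller acceptance family -/
  F : Set (Set Q)
  hF : ∀ X ∈ F, X ⊆ Qω
  /-- the semilinear Parikh constraint -/
  C : Set (Vec s)
  hC : IsSemilinearSetVec C

namespace PMTA

variable {σ : Type} {s : ℕ}

/-- A run of a PMTA on a tree `ζ` over `(Σ × D) ∪ Σ`. -/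
def IsRun (A : PMTA σ s) (ζ : Pos → σ × Option (Vec s)) (κ : Pos → A.Q) : Prop :=
  κ [] = A.qI ∧
  (∀ (ρ : Pos) (d : Vec s), (ζ ρ).2 = some d →
      (κ ρ, ((ζ ρ).1, d), κ (ρ ++ [false]), κ (ρ ++ [true])) ∈ A.ΔP) ∧
  (∀ ρ : Pos, (ζ ρ).2 = none →
      (κ ρ, (ζ ρ).1, κ (ρ ++ [false]), κ (ρ ++ [true])) ∈ A.Δω)

/-- The positions of `ζ` carrying a label from `Σ × D`. -/
def cntPos (ζ : Pos → σ × Option (Vec s)) : Set Pos := {ρ | (ζ ρ).2 ≠ none}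

/-- The extended Parikh map: the sum of all `D`-components occurring in `ζ`. -/
noncomputable def parikh (ζ : Pos → σ × Option (Vec s)) : Vec s :=
  ∑ᶠ ρ : Pos, ((ζ ρ).2.getD 0)

/-- An accepting run: the counting part is finite, the Parikh constraint is satisfied
whenever some counting position exists, all counter increments stem from `D`,
and every infinite path satisfies the Muller condition. -/
def IsAcceptingRun (A : PMTA σ s) (ζ : Pos → σ × Option (Vec s)) (κ : Pos → A.Q) : Prop :=
  A.IsRun ζ κ ∧ (cntPos ζ).Finite ∧
  ((cntPos ζ).Nonempty → parikh ζ ∈ A.C) ∧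
  (∀ (ρ : Pos) (d : Vec s), (ζ ρ).2 = some d → d ∈ A.D) ∧
  ∀ π : ℕ → Pos, IsPath π → infOcc (fun i => κ (π i)) ∈ A.F

/-- The language of a PMTA: all `Σ`-projections of trees admitting an accepting run. -/
def Language (A : PMTA σ s) : Set (Pos → σ) :=
  {ξ | ∃ (ζ : Pos → σ × Option (Vec s)) (κ : Pos → A.Q),
      (∀ ρ : Pos, (ζ ρ).1 = ξ ρ) ∧ A.IsAcceptingRun ζ κ}

end PMTA

/-- A tree language is PMTA-recognizable if it is the language of some PMTA
(of some dimension). -/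
def PMTARecognizable {σ : Type} (L : Set (Pos → σ)) : Prop :=
  ∃ (s : ℕ) (A : PMTA σ s), A.Language = L


/-!
The union automaton guesses at the root which component to simulate and then runs it, starting
from a fresh initial state that stands for the initial states of all components. The counters of
the components occupy disjoint blocks of coordinates, and one more coordinate per component counts
the counting positions, so the Parikh vector tells which component was simulated even when all of
its increments vanish; the Parikh constraint of the union only asks that coordinate to be positive.

A component may re-enter its initial state below a Muller position and count again there, which
the union cannot do, since Muller transitions lead to Muller states. The union therefore counts on
a whole ball around the root that contains all counting positions, reading the Muller transitions
of the component inside the ball as counting transitions with zero increment. The Muller condition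
only sees the states outside that ball, which are those of the component.
-/

open Filter

section InfOcc

variable {Q R : Type*}

lemma mem_infOcc_iff_frequently {g : ℕ → Q} {q : Q} :
    q ∈ infOcc g ↔ ∃ᶠ n in atTop, g n = q :=
  Nat.frequently_atTop_iff_infinite.symm

lemma infOcc_nonempty [Finite Q] (g : ℕ → Q) : (infOcc g).Nonempty := by
  obtain ⟨q, hq⟩ := Finite.exists_infinite_fiber g
  exact ⟨q, Set.infinite_coe_iff.mp hq⟩

lemma infOcc_congr {f g : ℕ → Q} (h : f =ᶠ[atTop] g) : infOcc f = infOcc g := by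
  ext q
  simp only [mem_infOcc_iff_frequently]
  exact frequently_congr (h.mono fun n hn => by rw [hn])

lemma infOcc_comp_injective {e : Q → R} (he : e.Injective) (g : ℕ → Q) :
    infOcc (e ∘ g) = e '' infOcc g := by
  ext r
  constructor
  · intro hr
    obtain ⟨n, rfl⟩ := hr.nonempty
    exact ⟨g n, by simpa [infOcc, he.eq_iff] using hr, rfl⟩
  · rintro ⟨q, hq, rfl⟩
    simpa [infOcc, he.eq_iff] using hq

end InfOcc

lemma IsPath.length_eq {π : ℕ → Pos} (h : IsPath π) (n : ℕ) : (π n).length = n := by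
  induction n with
  | zero => simp [h.1]
  | succ n ih => obtain ⟨b, hb⟩ := h.2 n; simp [hb, ih]

lemma IsPath.eventually_notMem {π : ℕ → Pos} (h : IsPath π) {S : Set Pos} (hS : S.Finite) :
    ∀ᶠ n in atTop, π n ∉ S := by
  have hinj : π.Injective := fun m n hmn => by
    rw [← h.length_eq m, ← h.length_eq n, hmn]
  exact Nat.cofinite_eq_atTop ▸ hinj.tendsto_cofinite.eventually hS.compl_mem_cofinite

lemma exists_length_bound {S : Set Pos} (hS : S.Finite) :
    ∃ n, (∀ ρ ∈ S, ρ.length < n) ∧ (0 < n → S.Nonempty) := by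
  refine ⟨hS.toFinset.sup fun ρ => ρ.length + 1, fun ρ hρ => ?_, fun hn => ?_⟩
  · exact Finset.le_sup (f := fun ρ : Pos => ρ.length + 1) (hS.mem_toFinset.2 hρ)
  · obtain ⟨ρ, hρ, -⟩ := Finset.lt_sup_iff.1 hn
    exact ⟨ρ, hS.mem_toFinset.1 hρ⟩

section Semilinear

variable {s s' : ℕ}

lemma IsLinearSetVec.image_add_smul {C : Set (Vec s)} (hC : IsLinearSetVec C)
    (f : Vec s →+ Vec s') (g : Vec s') :
    IsLinearSetVec {x | ∃ v ∈ C, ∃ t, 1 ≤ t ∧ x = f v + t • g} := by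
  obtain ⟨l, v₀, v, rfl⟩ := hC
  refine ⟨l + 1, f v₀ + g, Fin.snoc (fun i => f (v i)) g, ?_⟩
  ext x
  simp only [Set.mem_ofPred_eq, Fin.sum_univ_castSucc, Fin.snoc_castSucc, Fin.snoc_last]
  constructor
  · rintro ⟨-, ⟨m, rfl⟩, t, ht, rfl⟩
    obtain ⟨k, rfl⟩ := Nat.exists_eq_add_of_le' ht
    refine ⟨Fin.snoc m k, ?_⟩
    simp only [Fin.snoc_castSucc, Fin.snoc_last, map_add, map_sum, map_nsmul, succ_nsmul]
    abel
  · rintro ⟨m, rfl⟩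
    refine ⟨_, ⟨fun i => m i.castSucc, rfl⟩, m (Fin.last l) + 1, by omega, ?_⟩
    simp only [map_add, map_sum, map_nsmul, succ_nsmul]
    abel

lemma IsSemilinearSetVec.image_add_smul {C : Set (Vec s)} (hC : IsSemilinearSetVec C)
    (f : Vec s →+ Vec s') (g : Vec s') :
    IsSemilinearSetVec {x | ∃ v ∈ C, ∃ t, 1 ≤ t ∧ x = f v + t • g} := by
  obtain ⟨k, Cs, hlin, rfl⟩ := hC
  refine ⟨k, _, fun j => (hlin j).image_add_smul f g, ?_⟩
  ext x
  simp only [Set.mem_iUnion, Set.mem_ofPred_eq]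
  exact ⟨fun ⟨v, ⟨j, hv⟩, h⟩ => ⟨j, v, hv, h⟩, fun ⟨j, v, hv, h⟩ => ⟨v, ⟨j, hv⟩, h⟩⟩

lemma IsSemilinearSetVec.iUnion {ι : Type*} [Finite ι] {C : ι → Set (Vec s)}
    (hC : ∀ i, IsSemilinearSetVec (C i)) : IsSemilinearSetVec (⋃ i, C i) := by
  choose k Cs hlin hCs using hC
  let e := (Finite.equivFin (Σ i, Fin (k i))).symm
  refine ⟨_, fun n => Cs (e n).1 (e n).2, fun n => hlin _ _, ?_⟩
  rw [e.surjective.iUnion_comp (fun p => Cs p.1 p.2), Set.iUnion_sigma]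
  exact Set.iUnion_congr hCs

end Semilinear

namespace PMTA

section Runs

variable {σ : Type} {s : ℕ}

def Step (A : PMTA σ s) (q : A.Q) (a : σ) (q₀ q₁ : A.Q) : Option (Vec s) → Prop
  | some d => (q, (a, d), q₀, q₁) ∈ A.ΔP
  | none => (q, a, q₀, q₁) ∈ A.Δω

lemma isRun_iff {A : PMTA σ s} {ζ : Pos → σ × Option (Vec s)} {κ : Pos → A.Q} :
    A.IsRun ζ κ ↔ κ [] = A.qI ∧
      ∀ ρ, A.Step (κ ρ) (ζ ρ).1 (κ (ρ ++ [false])) (κ (ρ ++ [true])) (ζ ρ).2 := by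
  refine and_congr_right fun _ =>
    ⟨fun ⟨hP, hω⟩ ρ => ?_, fun h => ⟨fun ρ d hd => ?_, fun ρ hd => ?_⟩⟩
  · cases hd : (ζ ρ).2 with
    | some d => simpa [Step, hd] using hP ρ d hd
    | none => simpa [Step, hd] using hω ρ hd
  · simpa [Step, hd] using h ρ
  · simpa [Step, hd] using h ρ

lemma Step.mem_D {A : PMTA σ s} {q q₀ q₁ : A.Q} {a : σ} {d : Vec s}
    (h : A.Step q a q₀ q₁ (some d)) : d ∈ A.D :=
  (A.hΔP _ h).2

lemma IsRun.isAcceptingRun {A : PMTA σ s} {ζ : Pos → σ × Option (Vec s)} {κ : Pos → A.Q}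
    (hrun : A.IsRun ζ κ) (hfin : (cntPos ζ).Finite)
    (hC : (cntPos ζ).Nonempty → parikh ζ ∈ A.C)
    (hF : ∀ π, IsPath π → infOcc (fun i => κ (π i)) ∈ A.F) : A.IsAcceptingRun ζ κ :=
  ⟨hrun, hfin, hC, fun ρ d hd => (A.hΔP _ (hrun.2.1 ρ d hd)).2, hF⟩

lemma support_getD_subset_cntPos (ζ : Pos → σ × Option (Vec s)) :
    Function.support (fun ρ => (ζ ρ).2.getD 0) ⊆ cntPos ζ := fun ρ hρ hnone =>
  hρ (by simp [hnone])

lemma parikh_eq_map_add_ncard_smul {σ' : Type} {s' : ℕ} {ζ : Pos → σ × Option (Vec s)}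
    {ζ' : Pos → σ' × Option (Vec s')} (f : Vec s' →+ Vec s) (g : Vec s)
    (hfin : (cntPos ζ).Finite)
    (h : ∀ ρ, ((ζ ρ).2 = none ∧ (ζ' ρ).2 = none) ∨ (ζ ρ).2 = some (f ((ζ' ρ).2.getD 0) + g)) :
    parikh ζ = f (parikh ζ') + (cntPos ζ).ncard • g := by
  have hsub : cntPos ζ' ⊆ cntPos ζ := fun ρ hρ hnone => by
    rcases h ρ with ⟨-, h'⟩ | h'
    · exact hρ h'
    · simp [hnone] at h'
  have hsum : ∀ ρ ∈ hfin.toFinset, (ζ ρ).2.getD 0 = f ((ζ' ρ).2.getD 0) + g := fun ρ hρ => by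
    rcases h ρ with ⟨h', -⟩ | h'
    · exact absurd h' (hfin.mem_toFinset.1 hρ)
    · simp [h']
  rw [parikh, parikh, Set.ncard_eq_toFinset_card _ hfin,
    finsum_eq_sum_of_support_subset (s := hfin.toFinset) _
      (by simpa using support_getD_subset_cntPos ζ),
    finsum_eq_sum_of_support_subset (s := hfin.toFinset) _
      (by simpa using (support_getD_subset_cntPos ζ').trans hsub),
    Finset.sum_congr rfl hsum, Finset.sum_add_distrib, map_sum, Finset.sum_const]

end Runs

namespace iUnion

variable {ι σ : Type} {s : ι → ℕ}

section Coordinates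

variable [Finite ι]

abbrev Coord (s : ι → ℕ) : Type := (Σ i, Fin (s i)) ⊕ ι

noncomputable def dim (s : ι → ℕ) : ℕ := Nat.card (Coord s)

noncomputable def coord : Coord s ≃ Fin (dim s) := Finite.equivFin _

noncomputable def pad (i : ι) : Vec (s i) →+ Vec (dim s) :=
  Function.ExtendByZero.hom ℕ fun l => coord (.inl ⟨i, l⟩)

noncomputable def tag (i : ι) : Vec (dim s) := Pi.single (coord (.inr i)) 1

noncomputable def incr (i : ι) (o : Option (Vec (s i))) : Vec (dim s) :=
  pad i (o.getD 0) + tag i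

lemma pad_apply_inl (i : ι) (v : Vec (s i)) (l : Fin (s i)) :
    pad i v (coord (.inl ⟨i, l⟩)) = v l :=
  (coord.injective.comp fun _ _ h => by simpa using h).extend_apply _ _ _

lemma pad_apply_inr (i j : ι) (v : Vec (s i)) : pad i v (coord (.inr j)) = 0 := by
  refine Function.extend_apply' _ _ _ ?_
  rintro ⟨l, hl⟩
  exact Sum.inl_ne_inr (coord.injective hl)

lemma tag_apply_inl (i : ι) (p : Σ i, Fin (s i)) : tag i (coord (.inl p)) = 0 :=
  Pi.single_eq_of_ne (fun h => Sum.inl_ne_inr (coord.injective h)) _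

lemma tag_apply_inr_self (i : ι) : tag (s := s) i (coord (.inr i)) = 1 :=
  Pi.single_eq_same _ _

lemma tag_apply_inr_of_ne {i j : ι} (h : j ≠ i) : tag (s := s) i (coord (.inr j)) = 0 :=
  Pi.single_eq_of_ne (fun h' => h (Sum.inr_injective (coord.injective h'))) _

lemma index_eq_of_pad_add_smul_tag_eq {i j : ι} {u : Vec (s i)} {v : Vec (s j)} {t t' : ℕ}
    (h : pad i u + t • tag i = pad j v + t' • tag j) (ht : t ≠ 0) : i = j := by
  by_contra hij
  have := congrFun h (coord (.inr i))
  simp [pad_apply_inr, tag_apply_inr_self, tag_apply_inr_of_ne hij] at this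
  exact ht this

lemma vec_eq_of_pad_add_smul_tag_eq {i : ι} {u v : Vec (s i)} {t t' : ℕ}
    (h : pad i u + t • tag i = pad i v + t' • tag i) : u = v := funext fun l => by
  simpa [pad_apply_inl, tag_apply_inl] using congrFun h (coord (.inl ⟨i, l⟩))

end Coordinates

section States

variable (A : ∀ i, PMTA σ (s i))

/-- `none` is the initial state, standing for every `(A i).qI`; the flag of `some (⟨i, q⟩, m)`
records whether `q` is entered in counting mode. -/
abbrev State : Type := Option ((Σ i, (A i).Q) × Bool)

def emb (i : ι) (q : (A i).Q) (m : Bool) : State A := some (⟨i, q⟩, m)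

open Classical in
noncomputable def proj (i : ι) : State A → (A i).Q
  | some (⟨j, q⟩, _) => if h : j = i then h ▸ q else (A i).qI
  | none => (A i).qI

def OnSide (i : ι) (S : State A) : Prop := ∃ q m, S = emb A i q m

def IsSource (i : ι) (m : Bool) (S : State A) : Prop := S = none ∨ ∃ q, S = emb A i q m

variable {A}

lemma proj_emb (i : ι) (q : (A i).Q) (m : Bool) : proj A i (emb A i q m) = q := by
  simp [proj, emb]

lemma emb_injective (i : ι) (m : Bool) : Function.Injective fun q => emb A i q m :=
  fun q q' h => by simpa [emb] using h

lemma OnSide.eq {i j : ι} {S : State A} (hi : OnSide A i S) (hj : OnSide A j S) : i = j := by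
  obtain ⟨q, m, rfl⟩ := hi
  obtain ⟨q', m', h⟩ := hj
  simp only [emb, Option.some.injEq, Prod.mk.injEq, Sigma.mk.inj_iff] at h
  exact h.1.1

lemma OnSide.ne_none {i : ι} {S : State A} (h : OnSide A i S) : S ≠ none := by
  obtain ⟨q, m, rfl⟩ := h
  simp [emb]

lemma IsSource.onSide {i : ι} {m : Bool} {S : State A} (h : IsSource A i m S)
    (hS : S ≠ none) : OnSide A i S := by
  obtain ⟨q, rfl⟩ := h.resolve_left hS
  exact ⟨q, m, rfl⟩

end States

section Ball

variable (A : ∀ i, PMTA σ (s i)) (i : ι) (n : ℕ)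

def ballRun (κ₁ : Pos → (A i).Q) : Pos → State A :=
  fun ρ => if ρ = [] then none else emb A i (κ₁ ρ) (decide (ρ.length < n))

variable {A i n} {κ₁ : Pos → (A i).Q}

lemma ballRun_append_singleton (ρ : Pos) (b : Bool) :
    ballRun A i n κ₁ (ρ ++ [b]) = emb A i (κ₁ (ρ ++ [b])) (decide ((ρ ++ [b]).length < n)) :=
  if_neg (by simp)

lemma ballRun_comp_eventuallyEq {π : ℕ → Pos} (hπ : IsPath π) :
    (fun k => ballRun A i n κ₁ (π k)) =ᶠ[atTop] fun k => emb A i (κ₁ (π k)) false := by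
  filter_upwards [eventually_ge_atTop (max n 1)] with k hk
  have hlen := hπ.length_eq k
  have hne : π k ≠ [] := fun h => by simp [h] at hlen; omega
  simp only [ballRun, if_neg hne, hlen, decide_eq_false (show ¬ k < n by omega)]

end Ball

variable [Finite ι]

section Labels

variable (i : ι) (n : ℕ)

def Encodes (x : Option (Vec (dim s))) (o : Option (Vec (s i))) : Prop :=
  (x = none ∧ o = none) ∨ x = some (incr i o)

noncomputable def ballTree (ξ : Pos → σ) (ζ₁ : Pos → σ × Option (Vec (s i))) :
    Pos → σ × Option (Vec (dim s)) :=
  fun ρ => (ξ ρ, if ρ.length < n then some (incr i (ζ₁ ρ).2) else none)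

variable {i n} {ξ : Pos → σ} {ζ₁ : Pos → σ × Option (Vec (s i))}

lemma cntPos_ballTree : cntPos (ballTree i n ξ ζ₁) = {ρ | ρ.length < n} := by
  ext ρ
  by_cases h : ρ.length < n <;> simp [cntPos, ballTree, h]

lemma encodes_ballTree (hn : ∀ ρ ∈ cntPos ζ₁, ρ.length < n) (ρ : Pos) :
    Encodes i (ballTree i n ξ ζ₁ ρ).2 (ζ₁ ρ).2 := by
  by_cases h : ρ.length < n
  · exact Or.inr (if_pos h)
  · exact Or.inl ⟨if_neg h, by_contra fun h' => h (hn ρ h')⟩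

end Labels

variable (A : ∀ i, PMTA σ (s i))

def Transition (S : State A) (a : σ) (c₀ c₁ : State A) (x : Option (Vec (dim s))) : Prop :=
  ∃ (i : ι) (q₀ q₁ : (A i).Q) (m₀ m₁ : Bool) (o : Option (Vec (s i))),
    IsSource A i x.isSome S ∧ (A i).Step (proj A i S) a q₀ q₁ o ∧ Encodes i x o ∧
    c₀ = emb A i q₀ m₀ ∧ c₁ = emb A i q₁ m₁ ∧ (x = none → m₀ = false ∧ m₁ = false)

end iUnion

open iUnion

variable {ι σ : Type} [Finite ι] {s : ι → ℕ}

noncomputable def iUnion (A : ∀ i, PMTA σ (s i)) : PMTA σ (dim s) where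
  Q := State A
  finQ := by have := fun i => (A i).finQ; infer_instance
  QP := {S | ∃ p, S = some (p, false)}ᶜ
  Qω := {S | ∃ p, S = some (p, false)}
  hdisj := disjoint_compl_left
  hcover := Set.compl_union_self _
  qI := none
  D := ⋃ i, (fun d => pad i d + tag i) '' insert 0 (A i).D
  hD := Set.finite_iUnion fun i => ((A i).hD.insert 0).image _
  ΔP := {t | Transition A t.1 t.2.1.1 t.2.2.1 t.2.2.2 (some t.2.1.2)}
  Δω := {t | Transition A t.1 t.2.1 t.2.2.1 t.2.2.2 none}
  hΔP := by
    rintro ⟨S, ⟨a, d⟩, c₀, c₁⟩ ⟨i, q₀, q₁, m₀, m₁, o, hS, hstep, henc, -⟩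
    simp only [Option.isSome_some] at hS hstep henc ⊢
    refine ⟨?_, Set.mem_iUnion.2 ⟨i, o.getD 0, ?_, ?_⟩⟩
    · rcases hS with rfl | ⟨q, rfl⟩
      · exact Or.inr rfl
      · exact Or.inl (by simp [emb])
    · cases o with
      | none => exact Set.mem_insert _ _
      | some d => exact Set.mem_insert_of_mem _ hstep.mem_D
    · rcases henc with ⟨h, -⟩ | h
      · cases h
      · simpa [incr] using h.symm
  hΔω := by
    rintro ⟨S, a, c₀, c₁⟩ ⟨i, q₀, q₁, m₀, m₁, o, hS, -, -, rfl, rfl, hm⟩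
    obtain ⟨rfl, rfl⟩ := hm rfl
    refine ⟨?_, ⟨_, rfl⟩, ⟨_, rfl⟩⟩
    rcases hS with rfl | ⟨q, rfl⟩
    · exact Or.inr rfl
    · exact Or.inl ⟨_, rfl⟩
  F := {Y | ∃ i, ∃ X ∈ (A i).F, Y = (emb A i · false) '' X}
  hF := by
    rintro Y ⟨i, X, -, rfl⟩ _ ⟨q, -, rfl⟩
    exact ⟨_, rfl⟩
  C := ⋃ i, {x | ∃ v ∈ (A i).C, ∃ t, 1 ≤ t ∧ x = pad i v + t • tag i}
  hC := IsSemilinearSetVec.iUnion fun i => (A i).hC.image_add_smul (pad i) (tag i)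

variable {A : ∀ i, PMTA σ (s i)}

lemma iUnion_step_iff {S c₀ c₁ : State A} {a : σ} {x : Option (Vec (dim s))} :
    (iUnion A).Step S a c₀ c₁ x ↔ Transition A S a c₀ c₁ x := by
  cases x <;> rfl

lemma pad_add_smul_tag_mem_iUnion_C_iff {i : ι} {v : Vec (s i)} {t : ℕ} (ht : 1 ≤ t) :
    pad i v + t • tag i ∈ (iUnion A).C ↔ v ∈ (A i).C := by
  refine ⟨fun h => ?_, fun h => Set.mem_iUnion.2 ⟨i, v, h, t, ht, rfl⟩⟩
  obtain ⟨j, v', hv', t', -, heq⟩ := Set.mem_iUnion.1 h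
  obtain rfl := index_eq_of_pad_add_smul_tag_eq heq (by omega)
  rwa [vec_eq_of_pad_add_smul_tag_eq heq]

lemma infOcc_mem_iUnion_F_iff {i : ι} {g : ℕ → State A} {g' : ℕ → (A i).Q}
    (h : g =ᶠ[atTop] fun n => emb A i (g' n) false) :
    infOcc g ∈ (iUnion A).F ↔ infOcc g' ∈ (A i).F := by
  have := (A i).finQ
  rw [infOcc_congr h, show (fun n => emb A i (g' n) false) = (emb A i · false) ∘ g' from rfl,
    infOcc_comp_injective (emb_injective i false)]
  refine ⟨fun ⟨j, X, hX, hXeq⟩ => ?_, fun h => ⟨i, _, h, rfl⟩⟩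
  obtain ⟨q, hq⟩ := infOcc_nonempty g'
  obtain ⟨x, -, hx⟩ := hXeq ▸ Set.mem_image_of_mem (emb A i · false) hq
  obtain rfl : j = i := OnSide.eq ⟨x, false, rfl⟩ ⟨q, false, hx⟩
  rwa [(emb_injective j false).image_injective hXeq]

variable {i : ι} {n : ℕ} {ξ : Pos → σ} {ζ₁ : Pos → σ × Option (Vec (s i))} {κ₁ : Pos → (A i).Q}

lemma isRun_ballRun (hrun : (A i).IsRun ζ₁ κ₁) (hξ : ∀ ρ, (ζ₁ ρ).1 = ξ ρ)
    (hn : ∀ ρ ∈ cntPos ζ₁, ρ.length < n) :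
    (iUnion A).IsRun (ballTree i n ξ ζ₁) (ballRun A i n κ₁) := by
  have hproj (ρ : Pos) : proj A i (ballRun A i n κ₁ ρ) = κ₁ ρ := by
    by_cases hρ : ρ = []
    · subst hρ
      exact hrun.1.symm
    · simp only [ballRun, if_neg hρ, proj_emb]
  refine isRun_iff.2 ⟨rfl, fun ρ => iUnion_step_iff.2 ⟨i, _, _, _, _, (ζ₁ ρ).2, ?_, ?_,
    encodes_ballTree hn ρ, ballRun_append_singleton ρ false, ballRun_append_singleton ρ true,
    fun hnone => ?_⟩⟩
  · by_cases hρ : ρ = []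
    · exact Or.inl (if_pos hρ)
    · exact Or.inr ⟨κ₁ ρ, by by_cases h : ρ.length < n <;> simp [ballRun, ballTree, hρ, h]⟩
  · rw [hproj, show (ballTree i n ξ ζ₁ ρ).1 = (ζ₁ ρ).1 from (hξ ρ).symm]
    exact (isRun_iff.1 hrun).2 ρ
  · have : ¬ ρ.length < n := fun h => by simp [ballTree, h] at hnone
    simp only [List.length_append, List.length_singleton, decide_eq_false_iff_not]
    omega

theorem language_subset_iUnion_language (i : ι) : (A i).Language ⊆ (iUnion A).Language := by
  rintro ξ ⟨ζ₁, κ₁, hξ, hrun, hfin₁, hC₁, -, hF₁⟩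
  obtain ⟨n, hn, hpos⟩ := exists_length_bound hfin₁
  have hfin : (cntPos (ballTree i n ξ ζ₁)).Finite := by
    rw [cntPos_ballTree]
    exact List.finite_length_lt Bool n
  refine ⟨ballTree i n ξ ζ₁, ballRun A i n κ₁, fun _ => rfl,
    (isRun_ballRun hrun hξ hn).isAcceptingRun hfin (fun hne => ?_)
      fun π hπ => (infOcc_mem_iUnion_F_iff (ballRun_comp_eventuallyEq hπ)).2 (hF₁ π hπ)⟩
  have hn0 : 0 < n := by
    obtain ⟨ρ, hρ⟩ := hne
    rw [cntPos_ballTree] at hρ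
    exact Nat.zero_lt_of_lt hρ
  rw [parikh_eq_map_add_ncard_smul (ζ' := ζ₁) (pad i) (tag i) hfin (encodes_ballTree hn),
    pad_add_smul_tag_mem_iUnion_C_iff ((Set.ncard_pos hfin).2 hne)]
  exact hC₁ (hpos hn0)

section Soundness

variable {ζ : Pos → σ × Option (Vec (dim s))} {κ : Pos → State A}

lemma exists_onSide_of_isRun_iUnion (h : (iUnion A).IsRun ζ κ) :
    ∃ i, ∀ ρ ≠ [], OnSide A i (κ ρ) := by
  have hside (ρ : Pos) :
      ∃ j, IsSource A j (ζ ρ).2.isSome (κ ρ) ∧ ∀ b, OnSide A j (κ (ρ ++ [b])) := by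
    obtain ⟨j, q₀, q₁, m₀, m₁, -, hS, -, -, h₀, h₁, -⟩ := iUnion_step_iff.1 ((isRun_iff.1 h).2 ρ)
    exact ⟨j, hS, fun b => by cases b; exacts [⟨q₀, m₀, h₀⟩, ⟨q₁, m₁, h₁⟩]⟩
  obtain ⟨i, -, hi⟩ := hside []
  refine ⟨i, fun ρ hρ => ?_⟩
  induction ρ using List.reverseRecOn with
  | nil => exact absurd rfl hρ
  | append_singleton ρ b ih =>
    obtain ⟨j, hS, hj⟩ := hside ρ
    suffices j = i from this ▸ hj b
    by_cases h0 : ρ = []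
    · subst h0
      exact (hj false).eq (hi false)
    · exact (hS.onSide (ih h0).ne_none).eq (ih h0)

lemma exists_step_of_isRun_iUnion (h : (iUnion A).IsRun ζ κ) {i : ι}
    (hi : ∀ ρ ≠ [], OnSide A i (κ ρ)) (ρ : Pos) :
    ∃ o, IsSource A i (ζ ρ).2.isSome (κ ρ) ∧
      (A i).Step (proj A i (κ ρ)) (ζ ρ).1 (proj A i (κ (ρ ++ [false])))
        (proj A i (κ (ρ ++ [true]))) o ∧ Encodes i (ζ ρ).2 o := by
  obtain ⟨j, q₀, q₁, m₀, m₁, o, hS, hstep, henc, h₀, h₁, -⟩ :=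
    iUnion_step_iff.1 ((isRun_iff.1 h).2 ρ)
  obtain rfl : j = i := OnSide.eq ⟨q₀, m₀, h₀⟩ (hi _ (by simp))
  rw [h₀, h₁, proj_emb, proj_emb]
  exact ⟨o, hS, hstep, henc⟩

end Soundness

theorem iUnion_language_subset : (iUnion A).Language ⊆ ⋃ i, (A i).Language := by
  rintro ξ ⟨ζ, κ, hξ, hrun, hfin, hC, -, hF⟩
  obtain ⟨i, hi⟩ := exists_onSide_of_isRun_iUnion hrun
  choose ann hsrc hstep henc using exists_step_of_isRun_iUnion hrun hi
  let ζ₁ : Pos → σ × Option (Vec (s i)) := fun ρ => ((ζ ρ).1, ann ρ)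
  have hsub : cntPos ζ₁ ⊆ cntPos ζ := fun ρ hρ hnone =>
    hρ ((henc ρ).resolve_right (by simp [hnone])).2
  have hmuller {ρ : Pos} (hρ : ρ ∉ insert [] (cntPos ζ)) :
      κ ρ = emb A i (proj A i (κ ρ)) false := by
    simp only [Set.mem_insert_iff, not_or, cntPos, Set.mem_ofPred_eq, not_not] at hρ
    have hS := hsrc ρ
    rw [hρ.2] at hS
    obtain ⟨q, hq⟩ := hS.resolve_left (hi _ hρ.1).ne_none
    rw [hq, proj_emb]
    rfl
  refine Set.mem_iUnion.2 ⟨i, ζ₁, fun ρ => proj A i (κ ρ), hξ,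
    IsRun.isAcceptingRun (isRun_iff.2 ⟨by rw [hrun.1]; rfl, hstep⟩) (hfin.subset hsub)
      (fun hne₁ => ?_) fun π hπ => (infOcc_mem_iUnion_F_iff ?_).1 (hF π hπ)⟩
  · have hne := hne₁.mono hsub
    have := hC hne
    rwa [parikh_eq_map_add_ncard_smul (ζ' := ζ₁) (pad i) (tag i) hfin henc,
      pad_add_smul_tag_mem_iUnion_C_iff ((Set.ncard_pos hfin).2 hne)] at this
  · filter_upwards [hπ.eventually_notMem (hfin.insert [])] with k hk using hmuller hk

theorem language_iUnion : (iUnion A).Language = ⋃ i, (A i).Language :=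
  iUnion_language_subset.antisymm (Set.iUnion_subset language_subset_iUnion_language)

end PMTA

theorem pmta_union_general {σ : Type} {s₁ s₂ : ℕ}
    (A₁ : PMTA σ s₁) (A₂ : PMTA σ s₂) :
    ∃ (s : ℕ) (A : PMTA σ s), A.Language = A₁.Language ∪ A₂.Language := by
  let A : ∀ b : Bool, PMTA σ (cond b s₁ s₂) := fun b => match b with
    | true => A₁
    | false => A₂
  refine ⟨_, PMTA.iUnion A, ?_⟩
  rw [PMTA.language_iUnion, Set.union_eq_iUnion]
  exact Set.iUnion_congr fun b => by cases b <;> rfl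

/-- For any two PMTA over the same finite alphabet there is a PMTA recognizing the
union of their languages. -/
theorem pmta_union {σ : Type} [Fintype σ] {s₁ s₂ : ℕ}
    (A₁ : PMTA σ s₁) (A₂ : PMTA σ s₂) :
    ∃ (s : ℕ) (A : PMTA σ s), A.Language = A₁.Language ∪ A₂.Language :=
  pmta_union_general A₁ A₂
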